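/- The following statements are equivalent: (1) (X^Γ, σ_φ) is sensitive; (2) (X^Γ, σ_φ) is strongly sensitive; (3) φ : Γ → Γ has at least one non-quasi-periodic point. -/

import Mathlib

/-!
The coordinate `σ_φ^n(x)_γ = x(φ^n γ)` depends only on `x` along the forward orbit of `γ`.
If every point is quasi-periodic, every forward orbit is finite, so prescribing `y = x` on the
orbits of `e 0, …, e (N-1)` forces the first `N` coordinates of `σ_φ^n x` and `σ_φ^n y` to agree
for all `n`, and `D` stays below `2^{-N}`. If `a = e k` is not quasi-periodic, the points
`φ^n(a)`, `n ≥ 1`, are pairwise distinct, so a basic neighbourhood of `x` constrains only finitely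
many of them; changing `x` at `φ^n(a)` for all large `n` yields `y` with
`σ_φ^n(x)_a ≠ σ_φ^n(y)_a`, hence `D ≥ 2^{-(k+1)}`, for all large `n`.
-/

open Filter Topology

open scoped Classical in
/-- The metric `D` on `X^Γ`, via a fixed bijection `e : ℕ ≃ Γ`. -/
noncomputable def gsD {X Γ : Type*} (e : ℕ ≃ Γ) (x y : Γ → X) : ℝ :=
  ∑' n : ℕ, (if x (e n) = y (e n) then (0 : ℝ) else 1) / 2 ^ (n + 1)

/-- The generalized shift `σ_φ`. -/
def gshift {X Γ : Type*} (φ : Γ → Γ) : (Γ → X) → (Γ → X) := fun x => x ∘ φ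

/-- `(x, y)` is a scrambled pair of `f` with respect to the distance function `d`. -/
def scrambledPair {Z : Type*} (d : Z → Z → ℝ) (f : Z → Z) (x y : Z) : Prop :=
  liminf (fun n : ℕ => d (f^[n] x) (f^[n] y)) atTop = 0 ∧
    0 < limsup (fun n : ℕ => d (f^[n] x) (f^[n] y)) atTop

open Function

section Metric

-- `gsD` decides `x (e n) = y (e n)` classically; the summands below must use the same instance.
open scoped Classical

variable {X Γ : Type*} (e : ℕ ≃ Γ)

lemma gsD_term_nonneg (x y : Γ → X) (n : ℕ) :
    0 ≤ (if x (e n) = y (e n) then (0 : ℝ) else 1) / 2 ^ (n + 1) := by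
  split_ifs <;> positivity

lemma gsD_term_le (x y : Γ → X) (n : ℕ) :
    (if x (e n) = y (e n) then (0 : ℝ) else 1) / 2 ^ (n + 1) ≤ (1 / 2) ^ (n + 1) := by
  rw [one_div_pow]
  gcongr
  split_ifs <;> norm_num

lemma summable_gsD_term (x y : Γ → X) :
    Summable fun n => (if x (e n) = y (e n) then (0 : ℝ) else 1) / 2 ^ (n + 1) :=
  .of_nonneg_of_le (gsD_term_nonneg e x y) (gsD_term_le e x y)
    ((summable_nat_add_iff 1).mpr summable_geometric_two)

lemma pow_half_le_gsD {x y : Γ → X} {k : ℕ} (h : x (e k) ≠ y (e k)) :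
    (1 / 2 : ℝ) ^ (k + 1) ≤ gsD e x y := by
  have hk := (summable_gsD_term e x y).le_tsum k fun n _ => gsD_term_nonneg e x y n
  rwa [if_neg h, ← one_div_pow] at hk

lemma gsD_le_pow_half {x y : Γ → X} {N : ℕ} (h : ∀ i < N, x (e i) = y (e i)) :
    gsD e x y ≤ (1 / 2 : ℝ) ^ N := by
  have hhead : ∑ i ∈ Finset.range N,
      (if x (e i) = y (e i) then (0 : ℝ) else 1) / 2 ^ (i + 1) = 0 :=
    Finset.sum_eq_zero fun i hi => by simp [h i (Finset.mem_range.mp hi)]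
  have htail : ∀ i, (1 / 2 : ℝ) ^ (i + N + 1) = (1 / 2) ^ N / 2 / 2 ^ i := fun i => by
    rw [pow_succ, pow_add, one_div_pow 2 i]
    ring
  rw [gsD, ← (summable_gsD_term e x y).sum_add_tsum_nat_add N, hhead, zero_add]
  calc _ ≤ ∑' i, (1 / 2 : ℝ) ^ (i + N + 1) :=
        Summable.tsum_le_tsum (fun i => gsD_term_le e x y (i + N))
          ((summable_nat_add_iff N).mpr (summable_gsD_term e x y))
          ((summable_nat_add_iff (N + 1)).mpr summable_geometric_two)
    _ = (1 / 2) ^ N := by simp only [htail, tsum_geometric_two']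

end Metric

lemma gshift_iterate {X Γ : Type*} (φ : Γ → Γ) (n : ℕ) (x : Γ → X) :
    (gshift φ)^[n] x = x ∘ φ^[n] := by
  induction n generalizing x with
  | zero => rfl
  | succ n ih => rw [iterate_succ_apply, ih, iterate_succ']; rfl

section QuasiPeriodic

variable {Γ : Type*} {φ : Γ → Γ} {a : Γ}

def IsQuasiPeriodicPt (φ : Γ → Γ) (a : Γ) : Prop :=
  ∃ n m : ℕ, 1 ≤ m ∧ m < n ∧ φ^[n] a = φ^[m] a

lemma IsQuasiPeriodicPt.finite_range_iterate (h : IsQuasiPeriodicPt φ a) :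
    (Set.range fun k => φ^[k] a).Finite := by
  obtain ⟨n, m, -, hmn, hnm⟩ := h
  have hper : IsPeriodicPt φ (n - m) (φ^[m] a) := by
    rw [IsPeriodicPt, IsFixedPt, ← iterate_add_apply, Nat.sub_add_cancel hmn.le, hnm]
  refine ((Set.finite_Iio n).image fun j => φ^[j] a).subset ?_
  rintro _ ⟨k, rfl⟩
  rcases lt_or_ge k m with hk | hk
  · exact ⟨k, hk.trans hmn, rfl⟩
  · refine ⟨(k - m) % (n - m) + m, ?_, ?_⟩
    · have := Nat.mod_lt (k - m) (Nat.sub_pos_of_lt hmn)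
      simp only [Set.mem_Iio]
      omega
    · show φ^[_ + m] a = φ^[k] a
      rw [iterate_add_apply, hper.iterate_mod_apply, ← iterate_add_apply, Nat.sub_add_cancel hk]

lemma injective_iterate_succ_of_not_isQuasiPeriodicPt (h : ¬ IsQuasiPeriodicPt φ a) :
    Injective fun k => φ^[k + 1] a :=
  .of_lt_imp_ne fun p q hpq heq => h ⟨q + 1, p + 1, by omega, by omega, heq.symm⟩

lemma eventually_iterate_notMem_of_not_isQuasiPeriodicPt (h : ¬ IsQuasiPeriodicPt φ a)
    {I : Set Γ} (hI : I.Finite) : ∀ᶠ n in atTop, φ^[n] a ∉ I := by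
  have hsucc : Tendsto (fun k => φ^[k + 1] a) atTop cofinite :=
    Nat.cofinite_eq_atTop ▸ (injective_iterate_succ_of_not_isQuasiPeriodicPt h).tendsto_cofinite
  exact ((tendsto_add_atTop_iff_nat (f := fun n => φ^[n] a) 1).mp hsucc).eventually
    hI.eventually_cofinite_notMem

end QuasiPeriodic

section Sensitivity

variable {Z : Type*} [TopologicalSpace Z]

def IsSensitive (d : Z → Z → ℝ) (f : Z → Z) : Prop :=
  ∃ ε > (0 : ℝ), ∀ x : Z, ∀ U : Set Z, IsOpen U → x ∈ U →
    ∃ n : ℕ, ∃ y ∈ U, ε < d (f^[n] x) (f^[n] y)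

def IsStronglySensitive (d : Z → Z → ℝ) (f : Z → Z) : Prop :=
  ∃ ε > (0 : ℝ), ∀ x : Z, ∀ U : Set Z, IsOpen U → x ∈ U →
    ∃ y ∈ U, ∃ n₀ : ℕ, ∀ n ≥ n₀, ε < d (f^[n] x) (f^[n] y)

lemma IsStronglySensitive.isSensitive {d : Z → Z → ℝ} {f : Z → Z}
    (h : IsStronglySensitive d f) : IsSensitive d f := by
  obtain ⟨ε, hε, hstrong⟩ := h
  refine ⟨ε, hε, fun x U hU hx => ?_⟩
  obtain ⟨y, hy, n₀, hn₀⟩ := hstrong x U hU hx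
  exact ⟨n₀, y, hy, hn₀ n₀ le_rfl⟩

end Sensitivity

lemma exists_finset_forall_eq_imp_mem {ι : Type*} {A : ι → Type*} [∀ i, TopologicalSpace (A i)]
    {U : Set (∀ i, A i)} (hU : IsOpen U) {x : ∀ i, A i} (hx : x ∈ U) :
    ∃ I : Finset ι, ∀ y, (∀ i ∈ I, y i = x i) → y ∈ U := by
  obtain ⟨I, u, hu, hsub⟩ := isOpen_pi_iff.mp hU x hx
  exact ⟨I, fun y hy => hsub fun i hi => hy i hi ▸ (hu i hi).2⟩

section GeneralizedShift

variable {X Γ : Type*} [TopologicalSpace X] (e : ℕ ≃ Γ) {φ : Γ → Γ}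

lemma exists_not_isQuasiPeriodicPt_of_isSensitive [DiscreteTopology X] [Nonempty X]
    (hsens : IsSensitive (gsD e) (gshift (X := X) φ)) : ∃ a, ¬ IsQuasiPeriodicPt φ a := by
  by_contra! hqp
  obtain ⟨ε, hε, hsens⟩ := hsens
  obtain ⟨N, hN⟩ := exists_pow_lt_of_lt_one hε (by norm_num : (1 / 2 : ℝ) < 1)
  let G : Set Γ := ⋃ i ∈ Finset.range N, Set.range fun k => φ^[k] (e i)
  have hG : G.Finite :=
    (Finset.range N).finite_toSet.biUnion fun i _ => (hqp (e i)).finite_range_iterate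
  obtain ⟨x⟩ := (inferInstance : Nonempty (Γ → X))
  obtain ⟨n, y, hy, hlt⟩ := hsens x (G.pi fun γ => {x γ})
    (isOpen_set_pi hG fun _ _ => isOpen_discrete _) fun _ _ => rfl
  have hagree : ∀ i < N, ((gshift φ)^[n] x) (e i) = ((gshift φ)^[n] y) (e i) := fun i hi => by
    simp only [gshift_iterate, comp_apply]
    exact (hy _ (Set.mem_biUnion (Finset.mem_range.mpr hi) ⟨n, rfl⟩)).symm
  exact lt_irrefl _ (((gsD_le_pow_half e hagree).trans_lt hN).trans hlt)

lemma isStronglySensitive_of_not_isQuasiPeriodicPt [Nontrivial X] {a : Γ}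
    (ha : ¬ IsQuasiPeriodicPt φ a) : IsStronglySensitive (gsD e) (gshift (X := X) φ) := by
  classical
  refine ⟨(1 / 2) ^ (e.symm a + 2), by positivity, fun x U hU hx => ?_⟩
  obtain ⟨I, hI⟩ := exists_finset_forall_eq_imp_mem hU hx
  obtain ⟨n₀, hn₀⟩ :=
    eventually_atTop.mp (eventually_iterate_notMem_of_not_isQuasiPeriodicPt ha I.finite_toSet)
  choose other hother using fun v : X => exists_ne v
  let T : Set Γ := {γ | ∃ n ≥ n₀, φ^[n] a = γ}
  let y : Γ → X := T.piecewise (fun γ => other (x γ)) x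
  have hyU : y ∈ U := hI y fun γ hγ =>
    Set.piecewise_eq_of_notMem _ _ _ fun ⟨n, hn, hnγ⟩ => hn₀ n hn (hnγ ▸ hγ)
  refine ⟨y, hyU, n₀, fun n hn => ?_⟩
  have hdiff : ((gshift φ)^[n] x) (e (e.symm a)) ≠ ((gshift φ)^[n] y) (e (e.symm a)) := by
    simp only [gshift_iterate, comp_apply, Equiv.apply_symm_apply, y,
      Set.piecewise_eq_of_mem T _ _ ⟨n, hn, rfl⟩]
    exact (hother _).symm
  calc (1 / 2 : ℝ) ^ (e.symm a + 2) < (1 / 2) ^ (e.symm a + 1) :=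
        pow_lt_pow_right_of_lt_one₀ (by norm_num) (by norm_num) (by omega)
    _ ≤ _ := pow_half_le_gsD e hdiff

end GeneralizedShift

theorem stmt12_general {X Γ : Type*} [TopologicalSpace X] [DiscreteTopology X]
    [Nontrivial X] (e : ℕ ≃ Γ) (φ : Γ → Γ) :
    List.TFAE
      [ -- (1) sensitive
        (∃ ε > (0 : ℝ), ∀ x : Γ → X, ∀ U : Set (Γ → X), IsOpen U → x ∈ U →
          ∃ n : ℕ, ∃ y ∈ U, ε < gsD e ((gshift φ)^[n] x) ((gshift φ)^[n] y)),
        -- (2) strongly sensitive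
        (∃ ε > (0 : ℝ), ∀ x : Γ → X, ∀ U : Set (Γ → X), IsOpen U → x ∈ U →
          ∃ y ∈ U, ∃ n₀ : ℕ, ∀ n ≥ n₀,
            ε < gsD e ((gshift φ)^[n] x) ((gshift φ)^[n] y)),
        -- (3) φ has a non-quasi-periodic point
        (∃ a : Γ, ¬ ∃ n m : ℕ, 1 ≤ m ∧ m < n ∧ φ^[n] a = φ^[m] a) ] := by
  tfae_have 2 → 1 := IsStronglySensitive.isSensitive
  tfae_have 1 → 3 := exists_not_isQuasiPeriodicPt_of_isSensitive e
  tfae_have 3 → 2 := fun ⟨_, ha⟩ => isStronglySensitive_of_not_isQuasiPeriodicPt e ha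
  tfae_finish

/-- The following are equivalent: (1) `(X^Γ, σ_φ)` is sensitive;
(2) `(X^Γ, σ_φ)` is strongly sensitive; (3) `φ` has a non-quasi-periodic point. -/
theorem stmt12 {X Γ : Type*} [TopologicalSpace X] [DiscreteTopology X] [Finite X]
    [Nontrivial X] [Countable Γ] [Infinite Γ] (e : ℕ ≃ Γ) (φ : Γ → Γ) :
    List.TFAE
      [ -- (1) sensitive
        (∃ ε > (0 : ℝ), ∀ x : Γ → X, ∀ U : Set (Γ → X), IsOpen U → x ∈ U →
          ∃ n : ℕ, ∃ y ∈ U, ε < gsD e ((gshift φ)^[n] x) ((gshift φ)^[n] y)),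
        -- (2) strongly sensitive
        (∃ ε > (0 : ℝ), ∀ x : Γ → X, ∀ U : Set (Γ → X), IsOpen U → x ∈ U →
          ∃ y ∈ U, ∃ n₀ : ℕ, ∀ n ≥ n₀,
            ε < gsD e ((gshift φ)^[n] x) ((gshift φ)^[n] y)),
        -- (3) φ has a non-quasi-periodic point
        (∃ a : Γ, ¬ ∃ n m : ℕ, 1 ≤ m ∧ m < n ∧ φ^[n] a = φ^[m] a) ] :=
  stmt12_general e φ
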